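/- arXiv:2310.18871 — 2 statements merged into one kernel-verified Lean document; each statement's English description precedes it below -/
import Mathlib

section
/- Suppose F: R^d → R is L-smooth with minimum value F* and satisfies the Polyak–Łojasiewicz condition (1/2)‖∇F(x)‖² ≥ ν(F(x) - F*). Let g, g⁰ ∈ R^d with g⁰ = ∇F(x̄) and ‖g⁰ - g‖ ≤ L·e for some e ≥ 0. Then for any step size η > 0, F(x̄ - ηg) - F* ≤ F(x̄) - F* - (η/4)(1 - 2ηL)‖g‖² + (η/2)L²e² - (η/4)‖g⁰‖². -/
/-!
Along the segment `t ↦ x + t • v`, the gap `F (x + t • v) - t ⟪∇F x, v⟫ - (L / 2) t² ‖v‖²` has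
derivative `⟪∇F (x + t • v) - ∇F x, v⟫ - L t ‖v‖² ≤ 0` for `t ≥ 0`, so it decreases; comparing
`t = 0` and `t = 1` gives the descent lemma. For the step `x - η • g` the first-order term
`-η ⟪∇F x, g⟫` is rewritten by polarization in terms of `‖∇F x - g‖²`, `‖∇F x‖²` and `‖g‖²`,
and the error term is bounded by `(L e)²`.
-/

open scoped RealInnerProductSpace

section LipschitzGradient

variable {E : Type*} [NormedAddCommGroup E] [InnerProductSpace ℝ E] [CompleteSpace E]
  {F : E → ℝ} {L : ℝ}

theorem hasDerivAt_comp_add_smul_of_differentiableAt {x v : E} {t : ℝ}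
    (hF : DifferentiableAt ℝ F (x + t • v)) :
    HasDerivAt (fun s : ℝ => F (x + s • v)) ⟪gradient F (x + t • v), v⟫ t := by
  have hline : HasDerivAt (fun s : ℝ => x + s • v) v t := by
    simpa using ((hasDerivAt_id t).smul_const v).const_add x
  exact hF.hasGradientAt.hasFDerivAt.comp_hasDerivAt t hline

theorem inner_gradient_sub_le_of_lipschitz
    (hL : ∀ x y, ‖gradient F x - gradient F y‖ ≤ L * ‖x - y‖) (x v : E) {t : ℝ} (ht : 0 ≤ t) :
    ⟪gradient F (x + t • v) - gradient F x, v⟫ ≤ L * t * ‖v‖ ^ 2 := by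
  have hdist : ‖gradient F (x + t • v) - gradient F x‖ ≤ L * t * ‖v‖ := by
    simpa [norm_smul, abs_of_nonneg ht, mul_assoc] using hL (x + t • v) x
  calc ⟪gradient F (x + t • v) - gradient F x, v⟫
      ≤ ‖gradient F (x + t • v) - gradient F x‖ * ‖v‖ := real_inner_le_norm _ _
    _ ≤ L * t * ‖v‖ * ‖v‖ := mul_le_mul_of_nonneg_right hdist (norm_nonneg v)
    _ = L * t * ‖v‖ ^ 2 := by ring

theorem le_add_inner_gradient_add_sq_of_lipschitz_gradient (hF : Differentiable ℝ F)
    (hL : ∀ x y, ‖gradient F x - gradient F y‖ ≤ L * ‖x - y‖) (x y : E) :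
    F y ≤ F x + ⟪gradient F x, y - x⟫ + L / 2 * ‖y - x‖ ^ 2 := by
  set v := y - x
  let φ : ℝ → ℝ := fun t => F (x + t • v) - t * ⟪gradient F x, v⟫ - L / 2 * t ^ 2 * ‖v‖ ^ 2
  have hφ : ∀ t, HasDerivAt φ
      (⟪gradient F (x + t • v), v⟫ - ⟪gradient F x, v⟫ - L * t * ‖v‖ ^ 2) t := by
    intro t
    refine (((hasDerivAt_comp_add_smul_of_differentiableAt (hF _)).sub
      ((hasDerivAt_id t).mul_const ⟪gradient F x, v⟫)).sub
      (((hasDerivAt_pow 2 t).const_mul (L / 2)).mul_const (‖v‖ ^ 2))).congr_deriv ?_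
    simp only [Nat.cast_ofNat, one_mul, Nat.add_one_sub_one, pow_one]
    ring
  have hφ_anti : AntitoneOn φ (Set.Ici 0) := by
    refine antitoneOn_of_hasDerivWithinAt_nonpos (convex_Ici 0)
      (fun t _ => (hφ t).continuousAt.continuousWithinAt) (fun t _ => (hφ t).hasDerivWithinAt) ?_
    intro t ht
    rw [interior_Ici] at ht
    have hgrad := inner_gradient_sub_le_of_lipschitz hL x v ht.le
    rw [inner_sub_left] at hgrad
    linarith
  have hφ_le := hφ_anti Set.self_mem_Ici (Set.mem_Ici.mpr zero_le_one) zero_le_one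
  simp only [φ, zero_smul, add_zero, one_smul, add_sub_cancel, v] at hφ_le
  linarith

theorem apply_sub_smul_le_of_lipschitz_gradient (hF : Differentiable ℝ F)
    (hL : ∀ x y, ‖gradient F x - gradient F y‖ ≤ L * ‖x - y‖) (x g : E) (η : ℝ) :
    F (x - η • g) ≤ F x - η / 2 * (1 - η * L) * ‖g‖ ^ 2 + η / 2 * ‖gradient F x - g‖ ^ 2
      - η / 2 * ‖gradient F x‖ ^ 2 := by
  have hdescent := le_add_inner_gradient_add_sq_of_lipschitz_gradient hF hL x (x - η • g)
  have hstep : ‖x - η • g - x‖ ^ 2 = η ^ 2 * ‖g‖ ^ 2 := by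
    rw [sub_sub_cancel_left, norm_neg, norm_smul, mul_pow, Real.norm_eq_abs, sq_abs]
  have hinner : ⟪gradient F x, x - η • g - x⟫ = -η * ⟪gradient F x, g⟫ := by
    rw [sub_sub_cancel_left, inner_neg_right, real_inner_smul_right, neg_mul]
  have hpolar := norm_sub_sq_real (gradient F x) g
  rw [hstep, hinner] at hdescent
  linear_combination hdescent - η / 2 * hpolar

end LipschitzGradient

theorem stmt3_general (d : ℕ) (F : EuclideanSpace ℝ (Fin d) → ℝ) (L Fstar : ℝ)
    (hdiff : Differentiable ℝ F)
    (hL : ∀ x y, ‖gradient F x - gradient F y‖ ≤ L * ‖x - y‖)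
    (xbar g g0 : EuclideanSpace ℝ (Fin d)) (e η : ℝ) (hη : 0 < η)
    (hg0 : g0 = gradient F xbar) (hge : ‖g0 - g‖ ≤ L * e) :
    F (xbar - η • g) - Fstar
      ≤ F xbar - Fstar - (η/4)*(1 - 2*η*L)*‖g‖^2 + (η/2)*L^2*e^2 - (η/4)*‖g0‖^2 := by
  subst hg0
  have hstep := apply_sub_smul_le_of_lipschitz_gradient hdiff hL xbar g η
  have herr : ‖gradient F xbar - g‖ ^ 2 ≤ L ^ 2 * e ^ 2 := by
    rw [← mul_pow]; exact pow_le_pow_left₀ (norm_nonneg _) hge 2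
  have hslack : 0 ≤ η / 4 * ‖g‖ ^ 2 + η / 4 * ‖gradient F xbar‖ ^ 2 := by positivity
  linarith [mul_le_mul_of_nonneg_left herr (by positivity : (0:ℝ) ≤ η / 2)]

theorem stmt3 (d : ℕ) (F : EuclideanSpace ℝ (Fin d) → ℝ) (L ν Fstar : ℝ)
    (hdiff : Differentiable ℝ F)
    (hL : ∀ x y, ‖gradient F x - gradient F y‖ ≤ L * ‖x - y‖)
    (hlow : ∀ x, Fstar ≤ F x)
    (hν : 0 < ν)
    (hPL : ∀ x, ν * (F x - Fstar) ≤ (1/2) * ‖gradient F x‖^2)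
    (xbar g g0 : EuclideanSpace ℝ (Fin d)) (e η : ℝ) (he : 0 ≤ e) (hη : 0 < η)
    (hg0 : g0 = gradient F xbar) (hge : ‖g0 - g‖ ≤ L * e) :
    F (xbar - η • g) - Fstar
      ≤ F xbar - Fstar - (η/4)*(1 - 2*η*L)*‖g‖^2 + (η/2)*L^2*e^2 - (η/4)*‖g0‖^2 :=
  stmt3_general d F L Fstar hdiff hL xbar g g0 e η hη hg0 hge
end

section
/- The norm-sign compressor C(x) = (‖x‖_∞/2)·sign(x) (componentwise sign) on R^d satisfies E‖C(x)/r - x‖² ≤ (1 - ψ)‖x‖² with r = d/2 and ψ = 1/d², i.e., ‖(2/d)C(x) - x‖² ≤ (1 - 1/d²)‖x‖² for all x ∈ R^d. -/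
/-!
Write `M = ‖x‖_∞`, `S = ‖x‖₁`, `Q = ‖x‖₂²` and `d` for the dimension. Expanding the square
coordinatewise, the error of the scaled sign vector is `M²/d - 2MS/d + Q`, so the claim is
`Q + dM² ≤ 2dMS`. This follows from the two comparisons `Q ≤ MS` and `M ≤ S` between the norms.
-/

open Finset

section SignCompression

variable {ι : Type*} [Fintype ι]

lemma mul_sign_sub_sq (c a : ℝ) :
    (c * (if 0 ≤ a then (1:ℝ) else -1) - a) ^ 2 = c ^ 2 - 2 * c * |a| + a ^ 2 := by
  split_ifs with ha
  · rw [abs_of_nonneg ha]; ring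
  · rw [abs_of_neg (not_le.mp ha)]; ring

lemma sum_mul_sign_sub_sq (c : ℝ) (x : ι → ℝ) :
    ∑ i, (c * (if 0 ≤ x i then (1:ℝ) else -1) - x i) ^ 2
      = Fintype.card ι * c ^ 2 - 2 * c * ∑ i, |x i| + ∑ i, x i ^ 2 := by
  simp only [mul_sign_sub_sq, sum_add_distrib, sum_sub_distrib, sum_const, card_univ,
    nsmul_eq_mul, mul_sum]

lemma pi_norm_le_sum_abs (x : ι → ℝ) : ‖x‖ ≤ ∑ i, |x i| :=
  (pi_norm_le_iff_of_nonneg (sum_nonneg fun i _ => abs_nonneg (x i))).2 fun i =>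
    (Real.norm_eq_abs (x i)).trans_le (single_le_sum (fun j _ => abs_nonneg (x j)) (mem_univ i))

lemma sum_sq_le_pi_norm_mul_sum_abs (x : ι → ℝ) : ∑ i, x i ^ 2 ≤ ‖x‖ * ∑ i, |x i| := by
  rw [mul_sum]
  refine sum_le_sum fun i _ => ?_
  rw [← sq_abs, sq]
  exact mul_le_mul_of_nonneg_right (by simpa using norm_le_pi_norm x i) (abs_nonneg _)

lemma sum_sq_add_card_mul_pi_norm_sq_le [Nonempty ι] (x : ι → ℝ) :
    ∑ i, x i ^ 2 + Fintype.card ι * ‖x‖ ^ 2 ≤ 2 * Fintype.card ι * ‖x‖ * ∑ i, |x i| := by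
  have hQ := sum_sq_le_pi_norm_mul_sum_abs x
  have hMS := mul_le_mul_of_nonneg_left (pi_norm_le_sum_abs x) (norm_nonneg x)
  have hn : (1:ℝ) ≤ Fintype.card ι := by exact_mod_cast Fintype.card_pos
  nlinarith [mul_nonneg (norm_nonneg x) (sum_nonneg fun i (_ : i ∈ univ) => abs_nonneg (x i))]

end SignCompression

theorem stmt15_general (d : ℕ) (x : Fin d → ℝ) :
    ∑ i, ((‖x‖ / d) * (if 0 ≤ x i then (1:ℝ) else -1) - x i)^2
      ≤ (1 - 1/(d:ℝ)^2) * ∑ i, (x i)^2 := by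
  obtain rfl | hd := Nat.eq_zero_or_pos d
  · simp
  have : Nonempty (Fin d) := Fin.pos_iff_nonempty.mp hd
  have key := sum_sq_add_card_mul_pi_norm_sq_le x
  rw [Fintype.card_fin] at key
  rw [sum_mul_sign_sub_sq, Fintype.card_fin]
  set M := ‖x‖
  set S := ∑ i, |x i|
  set Q := ∑ i, x i ^ 2
  have gap_eq : d * (M / d) ^ 2 - 2 * (M / d) * S + Q - (1 - 1 / (d:ℝ) ^ 2) * Q
      = (Q + d * M ^ 2 - 2 * d * M * S) / d ^ 2 := by
    field_simp
    ring
  have gap_nonpos : (Q + d * M ^ 2 - 2 * d * M * S) / (d:ℝ) ^ 2 ≤ 0 :=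
    div_nonpos_of_nonpos_of_nonneg (by linarith) (by positivity)
  linarith

theorem stmt15 (d : ℕ) (hd : 0 < d) (x : Fin d → ℝ) :
    ∑ i, ((‖x‖ / d) * (if 0 ≤ x i then (1:ℝ) else -1) - x i)^2
      ≤ (1 - 1/(d:ℝ)^2) * ∑ i, (x i)^2 :=
  stmt15_general d x
end
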